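/- arXiv:1611.09727 — 4 statements merged into one kernel-verified Lean document; each statement's English description precedes it below -/
import Mathlib

section
/- Single-breakpoint CUSUM lower bound: Let s ≤ η < e be integers, a, b ∈ ℝ with |a − b| ≥ m > 0, and let σ_t = a for s ≤ t ≤ η and σ_t = b for η < t ≤ e; set n = e − s + 1. If min(η − s + 1, e − η) ≥ δ for some 0 < δ ≤ n/2, then |S^η_{s,e}| ≥ m · √(δ(n − δ)/n) ≥ m √(δ/2). -/
/-- The CUSUM statistic `𝕐^b_{s,e}` of the sequence `y` over the interval `[s, e]`
with split point `b`. -/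
noncomputable def cusum (y : ℕ → ℝ) (s b e : ℕ) : ℝ :=
  Real.sqrt (((e : ℝ) - b) / ((((e : ℝ) - s + 1)) * ((b : ℝ) - s + 1))) *
      ∑ t ∈ Finset.Icc s b, y t -
    Real.sqrt (((b : ℝ) - s + 1) / ((((e : ℝ) - s + 1)) * ((e : ℝ) - b))) *
      ∑ t ∈ Finset.Icc (b + 1) e, y t

/-!
For a signal that is `a` on the first `N₁ = η - s + 1` points and `b` on the last `N₂ = e - η`,
the CUSUM statistic at the breakpoint collapses to `√(N₁ N₂ / n) · (a - b)`.
Since `N₁ + N₂ = n`, `N₁ N₂ - δ (n - δ) = (N₁ - δ)(N₂ - δ) ≥ 0`, and for `δ ≤ n / 2` one has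
`δ (n - δ) / n ≥ δ / 2`.
-/

open Finset

theorem sum_Icc_eq_of_forall_eq {y : ℕ → ℝ} {p q : ℕ} {c : ℝ} (hpq : p ≤ q + 1)
    (hy : ∀ t, p ≤ t → t ≤ q → y t = c) :
    ∑ t ∈ Icc p q, y t = ((q : ℝ) - p + 1) * c := by
  rw [sum_congr rfl fun t ht => hy t (mem_Icc.mp ht).1 (mem_Icc.mp ht).2, sum_const,
    Nat.card_Icc, nsmul_eq_mul, Nat.cast_sub hpq]
  push_cast
  ring

theorem Real.sqrt_div_mul_mul_self {x y n : ℝ} (hx : 0 ≤ x) :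
    √(y / (n * x)) * x = √(x * y / n) := by
  rcases hx.eq_or_lt with rfl | hx
  · simp
  rw [← Real.sqrt_sq hx.le, ← Real.sqrt_mul' _ (sq_nonneg x), Real.sqrt_sq hx.le]
  congr 1
  field_simp

theorem cusum_of_piecewise_const {σ : ℕ → ℝ} {s η e : ℕ} {a b : ℝ} (hsη : s ≤ η) (hηe : η < e)
    (ha : ∀ t, s ≤ t → t ≤ η → σ t = a) (hb : ∀ t, η < t → t ≤ e → σ t = b) :
    cusum σ s η e =
      √(((η : ℝ) - s + 1) * ((e : ℝ) - η) / ((e : ℝ) - s + 1)) * (a - b) := by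
  have hsηR : (s : ℝ) ≤ η := by exact_mod_cast hsη
  have hηeR : (η : ℝ) < e := by exact_mod_cast hηe
  have hsum₁ : ∑ t ∈ Icc s η, σ t = ((η : ℝ) - s + 1) * a :=
    sum_Icc_eq_of_forall_eq (by omega) ha
  have hsum₂ : ∑ t ∈ Icc (η + 1) e, σ t = ((e : ℝ) - η) * b := by
    rw [sum_Icc_eq_of_forall_eq (by omega) hb]
    push_cast
    ring
  unfold cusum
  rw [hsum₁, hsum₂, ← mul_assoc, ← mul_assoc, Real.sqrt_div_mul_mul_self (by linarith),
    Real.sqrt_div_mul_mul_self (by linarith), mul_comm ((e : ℝ) - η)]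
  ring

theorem mul_sub_le_mul_of_le_of_le {δ x y : ℝ} (hx : δ ≤ x) (hy : δ ≤ y) :
    δ * (x + y - δ) ≤ x * y := by
  nlinarith [mul_nonneg (sub_nonneg.mpr hx) (sub_nonneg.mpr hy)]

theorem half_le_mul_sub_div {δ n : ℝ} (hδ : 0 ≤ δ) (hδn : δ ≤ n / 2) :
    δ / 2 ≤ δ * (n - δ) / n := by
  rcases hδ.eq_or_lt with rfl | hδ
  · simp
  rw [div_le_div_iff₀ two_pos (by linarith)]
  nlinarith

/-- **Single-breakpoint CUSUM lower bound.**  If `σ_t = a` on `[s, η]`, `σ_t = b` on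
`(η, e]`, `|a − b| ≥ m > 0` and both segments have length at least `δ` with
`0 < δ ≤ n/2` (where `n = e − s + 1`), then
`|S^η_{s,e}| ≥ m·√(δ(n − δ)/n) ≥ m·√(δ/2)`. -/
theorem cusum_single_breakpoint_lower_bound (s η e : ℕ) (hsη : s ≤ η) (hηe : η < e)
    (a b m δ : ℝ) (σ : ℕ → ℝ) (hm : 0 < m) (hab : m ≤ |a - b|)
    (ha : ∀ t, s ≤ t → t ≤ η → σ t = a) (hb : ∀ t, η < t → t ≤ e → σ t = b)
    (hδpos : 0 < δ) (hδhalf : δ ≤ ((e : ℝ) - s + 1) / 2)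
    (hδmin : δ ≤ min ((η : ℝ) - s + 1) ((e : ℝ) - η)) :
    m * Real.sqrt (δ * (((e : ℝ) - s + 1) - δ) / ((e : ℝ) - s + 1)) ≤ |cusum σ s η e| ∧
      m * Real.sqrt (δ / 2) ≤
        m * Real.sqrt (δ * (((e : ℝ) - s + 1) - δ) / ((e : ℝ) - s + 1)) := by
  have hn : (0 : ℝ) < (e : ℝ) - s + 1 := by
    have : (s : ℝ) ≤ e := by exact_mod_cast hsη.trans hηe.le
    linarith
  have hsplit : δ * (((e : ℝ) - s + 1) - δ) ≤ ((η : ℝ) - s + 1) * ((e : ℝ) - η) := by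
    have := mul_sub_le_mul_of_le_of_le (hδmin.trans (min_le_left _ _))
      (hδmin.trans (min_le_right _ _))
    convert this using 2
    ring
  refine ⟨?_, mul_le_mul_of_nonneg_left
    (Real.sqrt_le_sqrt (half_le_mul_sub_div hδpos.le hδhalf)) hm.le⟩
  rw [cusum_of_piecewise_const hsη hηe ha hb, abs_mul, abs_of_nonneg (Real.sqrt_nonneg _),
    mul_comm]
  exact mul_le_mul (Real.sqrt_le_sqrt (div_le_div_of_nonneg_right hsplit hn.le)) hab hm.le
    (Real.sqrt_nonneg _)
end

section
/- CUSUM maximum attained at a breakpoint: Let (σ_t)_{t=s}^{e} be a real-valued sequence that is piecewise constant with breakpoints s ≤ η_1 < … < η_q < e (q ≥ 1), i.e., σ is constant on [s, η_1], on each (η_j, η_{j+1}], and on (η_q, e]. Then the maximum of |S^t_{s,e}| over s < t < e is attained at one of the breakpoints: there exists 1 ≤ r* ≤ q with |S^{η_{r*}}_{s,e}| = max_{s<t<e} |S^t_{s,e}|. -/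
/-! Subtracting the constant value `c` that `σ` takes on a segment leaves the CUSUM unchanged.
With the weight `w_t = √((t - s + 1) / (e - t))`, which increases in `t`, one gets
`√(e - s + 1) · S^t = A / w_t - B · w_t`, where `A` and `B` are the sums of `σ - c` to the left
and to the right of the segment, hence do not depend on `t` within it. Now `|d / u - K u|` has no
strict interior maximum on an interval of `u > 0`, so on each segment `|S^t|` is dominated by its
values at the two ends. On the first segment `A = 0` and on the last one `B = 0`, and `|S^t|` is
monotone there, increasing towards `η 1` and decreasing away from `η q`. -/

open Finset

lemma div_sub_mul_le_max_abs {d K u u₁ u₂ : ℝ} (hu₁ : 0 < u₁) (h₁ : u₁ ≤ u) (h₂ : u ≤ u₂) :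
    d / u - K * u ≤ max |d / u₁ - K * u₁| |d / u₂ - K * u₂| := by
  by_contra! h
  have hu : 0 < u := hu₁.trans_le h₁
  have hu₂ : 0 < u₂ := hu.trans_le h₂
  have hgt₁ : d / u₁ - K * u₁ < d / u - K * u :=
    (le_abs_self _).trans_lt ((le_max_left _ _).trans_lt h)
  have hgt₂ : d / u₂ - K * u₂ < d / u - K * u :=
    (le_abs_self _).trans_lt ((le_max_right _ _).trans_lt h)
  have hpos : 0 < d / u - K * u := (abs_nonneg _).trans_lt ((le_max_left _ _).trans_lt h)
  have hneg₁ : (u - u₁) * (d + K * u * u₁) < 0 := by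
    have e : (u - u₁) * (d + K * u * u₁) = u * u₁ * ((d / u₁ - K * u₁) - (d / u - K * u)) := by
      field_simp; ring
    rw [e]; exact mul_neg_of_pos_of_neg (by positivity) (by linarith)
  have hneg₂ : (u - u₂) * (d + K * u * u₂) < 0 := by
    have e : (u - u₂) * (d + K * u * u₂) = u * u₂ * ((d / u₂ - K * u₂) - (d / u - K * u)) := by
      field_simp; ring
    rw [e]; exact mul_neg_of_pos_of_neg (by positivity) (by linarith)
  have hpos' : 0 < d - K * u * u := by
    have e : d - K * u * u = u * (d / u - K * u) := by field_simp
    rw [e]; positivity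
  -- `hd₁` and `hd₂` force `K > 0`; then `hpos'` gives `d > 0`, contradicting `hd₁`.
  have hd₁ : d + K * u * u₁ < 0 := by nlinarith
  have hd₂ : 0 < d + K * u * u₂ := by nlinarith
  nlinarith

lemma abs_div_sub_mul_le_max_abs {d K u u₁ u₂ : ℝ} (hu₁ : 0 < u₁) (h₁ : u₁ ≤ u) (h₂ : u ≤ u₂) :
    |d / u - K * u| ≤ max |d / u₁ - K * u₁| |d / u₂ - K * u₂| := by
  have hneg : ∀ v : ℝ, -d / v - -K * v = -(d / v - K * v) := fun v ↦ by ring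
  have := div_sub_mul_le_max_abs (d := -d) (K := -K) hu₁ h₁ h₂
  rw [hneg, hneg, hneg, abs_neg, abs_neg] at this
  exact abs_le.2 ⟨by linarith, div_sub_mul_le_max_abs hu₁ h₁ h₂⟩

noncomputable def cusumWeight (s t e : ℕ) : ℝ := √(((t : ℝ) - s + 1) / ((e : ℝ) - t))

section cusumWeight

variable {s t t' e : ℕ}

lemma cusumWeight_pos (hst : s ≤ t) (hte : t < e) : 0 < cusumWeight s t e := by
  have : (s : ℝ) ≤ t := by exact_mod_cast hst
  have : (t : ℝ) < e := by exact_mod_cast hte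
  exact Real.sqrt_pos.2 (div_pos (by linarith) (by linarith))

lemma cusumWeight_le_cusumWeight (hst : s ≤ t) (htt' : t ≤ t') (hte : t' < e) :
    cusumWeight s t e ≤ cusumWeight s t' e := by
  have : (s : ℝ) ≤ t := by exact_mod_cast hst
  have : (t : ℝ) ≤ t' := by exact_mod_cast htt'
  have : (t' : ℝ) < e := by exact_mod_cast hte
  exact Real.sqrt_le_sqrt (div_le_div₀ (by linarith) (by linarith) (by linarith) (by linarith))

lemma sq_cusumWeight (hst : s ≤ t) (hte : t < e) :
    cusumWeight s t e ^ 2 = ((t : ℝ) - s + 1) / ((e : ℝ) - t) := by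
  have : (s : ℝ) ≤ t := by exact_mod_cast hst
  have : (t : ℝ) < e := by exact_mod_cast hte
  exact Real.sq_sqrt (div_pos (by linarith) (by linarith)).le

end cusumWeight

lemma cusum_eq_weight (y : ℕ → ℝ) {s t e : ℕ} (hst : s ≤ t) (hte : t < e) :
    cusum y s t e = ((∑ x ∈ Icc s t, y x) / cusumWeight s t e
      - (∑ x ∈ Icc (t + 1) e, y x) * cusumWeight s t e) / √((e : ℝ) - s + 1) := by
  have hm : (0 : ℝ) < t - s + 1 := by linarith [(Nat.cast_le (α := ℝ)).2 hst]
  have hk : (0 : ℝ) < e - t := by linarith [(Nat.cast_lt (α := ℝ)).2 hte]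
  have hn : (e : ℝ) - s + 1 = (t - s + 1) + (e - t) := by ring
  simp only [cusum, cusumWeight, hn]
  rw [Real.sqrt_div hk.le, Real.sqrt_div hm.le, Real.sqrt_div hm.le,
    Real.sqrt_mul (by positivity), Real.sqrt_mul (by positivity)]
  have hm' := Real.sqrt_pos.2 hm
  have hk' := Real.sqrt_pos.2 hk
  have hn' := Real.sqrt_pos.2 (add_pos hm hk)
  field_simp

lemma cusum_sub_const (y : ℕ → ℝ) (c : ℝ) {s t e : ℕ} (hst : s ≤ t) (hte : t < e) :
    cusum (fun x ↦ y x - c) s t e = cusum y s t e := by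
  have hw := sq_cusumWeight hst hte
  have hk : (e : ℝ) - t ≠ 0 := by linarith [(Nat.cast_lt (α := ℝ)).2 hte]
  rw [cusum_eq_weight _ hst hte, cusum_eq_weight _ hst hte, sum_sub_distrib, sum_sub_distrib,
    sum_const, sum_const, Nat.card_Icc, Nat.card_Icc, nsmul_eq_mul, nsmul_eq_mul,
    Nat.cast_sub (by omega), Nat.cast_sub (by omega)]
  push_cast
  field_simp
  rw [hw]
  field_simp
  ring

lemma sum_Icc_eq_sum_Icc_of_eq_zero {M : Type*} [AddCommMonoid M] {f : ℕ → M} {a l t : ℕ}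
    (hlt : l ≤ t) (hf : ∀ x, l < x → x ≤ t → f x = 0) :
    ∑ x ∈ Icc a t, f x = ∑ x ∈ Icc a l, f x := by
  refine (sum_subset (Icc_subset_Icc_right hlt) fun x hx hxl ↦ hf x ?_ (mem_Icc.1 hx).2).symm
  simp only [mem_Icc, not_and, not_le] at hx hxl
  exact hxl hx.1

lemma sum_Icc_succ_eq_sum_Icc_succ_of_eq_zero {M : Type*} [AddCommMonoid M] {f : ℕ → M}
    {b l t : ℕ} (hlt : l ≤ t) (hf : ∀ x, l < x → x ≤ t → f x = 0) :
    ∑ x ∈ Icc (t + 1) b, f x = ∑ x ∈ Icc (l + 1) b, f x := by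
  refine sum_subset (Icc_subset_Icc_left (by omega)) fun x hx hxt ↦ hf x ?_ ?_
  all_goals simp only [mem_Icc, not_and, not_le] at hx hxt; omega

lemma cusum_eq_of_eqOn_Ioc (σ : ℕ → ℝ) {c : ℝ} {s l t e : ℕ} (hsl : s ≤ l) (hlt : l ≤ t)
    (hte : t < e) (hσ : ∀ x, l < x → x ≤ t → σ x = c) :
    cusum σ s t e = ((∑ x ∈ Icc s l, (σ x - c)) / cusumWeight s t e
      - (∑ x ∈ Icc (l + 1) e, (σ x - c)) * cusumWeight s t e) / √((e : ℝ) - s + 1) := by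
  have hσ' : ∀ x, l < x → x ≤ t → σ x - c = 0 := fun x h₁ h₂ ↦ sub_eq_zero.2 (hσ x h₁ h₂)
  rw [← cusum_sub_const σ c (hsl.trans hlt) hte, cusum_eq_weight _ (hsl.trans hlt) hte,
    sum_Icc_eq_sum_Icc_of_eq_zero hlt hσ', sum_Icc_succ_eq_sum_Icc_succ_of_eq_zero hlt hσ']

section segment

variable (σ : ℕ → ℝ) {c : ℝ} {s l t r e : ℕ}

lemma abs_cusum_le_max_of_eqOn_Ioc (hsl : s ≤ l) (hlt : l ≤ t) (htr : t ≤ r) (hre : r < e)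
    (hσ : ∀ x, l < x → x ≤ r → σ x = c) :
    |cusum σ s t e| ≤ max |cusum σ s l e| |cusum σ s r e| := by
  have hform : ∀ t', l ≤ t' → t' ≤ r → cusum σ s t' e = _ := fun t' h₁ h₂ ↦
    cusum_eq_of_eqOn_Ioc σ hsl h₁ (h₂.trans_lt hre) fun x hx₁ hx₂ ↦ hσ x hx₁ (hx₂.trans h₂)
  rw [hform t hlt htr, hform l le_rfl (hlt.trans htr), hform r (hlt.trans htr) le_rfl,
    abs_div, abs_div, abs_div, max_div_div_right (abs_nonneg _)]
  gcongr
  exact abs_div_sub_mul_le_max_abs (cusumWeight_pos hsl (by omega))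
    (cusumWeight_le_cusumWeight hsl hlt (by omega))
    (cusumWeight_le_cusumWeight (hsl.trans hlt) htr hre)

lemma abs_cusum_le_of_eqOn_Icc_left (hst : s ≤ t) (htr : t ≤ r) (hre : r < e)
    (hσ : ∀ x, s ≤ x → x ≤ r → σ x = σ s) :
    |cusum σ s t e| ≤ |cusum σ s r e| := by
  have hform : ∀ t', s ≤ t' → t' ≤ r → cusum σ s t' e = _ := fun t' h₁ h₂ ↦
    cusum_eq_of_eqOn_Ioc σ le_rfl h₁ (h₂.trans_lt hre)
      fun x hx₁ hx₂ ↦ hσ x hx₁.le (hx₂.trans h₂)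
  rw [hform t hst htr, hform r (hst.trans htr) le_rfl]
  simp only [Icc_self, sum_singleton, sub_self, zero_div, zero_sub, abs_div, abs_neg, abs_mul,
    abs_of_pos (cusumWeight_pos hst (htr.trans_lt hre)),
    abs_of_pos (cusumWeight_pos (hst.trans htr) hre)]
  gcongr
  exact cusumWeight_le_cusumWeight hst htr hre

lemma abs_cusum_le_of_eqOn_Ioc_right (hsl : s ≤ l) (hlt : l ≤ t) (hte : t < e)
    (hσ : ∀ x, l < x → x ≤ e → σ x = c) :
    |cusum σ s t e| ≤ |cusum σ s l e| := by
  have hform : ∀ t', l ≤ t' → t' < e → cusum σ s t' e = _ := fun t' h₁ h₂ ↦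
    cusum_eq_of_eqOn_Ioc σ hsl h₁ h₂ fun x hx₁ hx₂ ↦ hσ x hx₁ (hx₂.trans h₂.le)
  have hB : ∑ x ∈ Icc (l + 1) e, (σ x - c) = 0 :=
    sum_eq_zero fun x hx ↦ sub_eq_zero.2 (hσ x (by rw [mem_Icc] at hx; omega) (mem_Icc.1 hx).2)
  rw [hform t hlt hte, hform l le_rfl (hlt.trans_lt hte), hB]
  simp only [zero_mul, sub_zero, abs_div, abs_of_pos (cusumWeight_pos (hsl.trans hlt) hte),
    abs_of_pos (cusumWeight_pos hsl (hlt.trans_lt hte))]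
  gcongr
  · exact cusumWeight_pos hsl (hlt.trans_lt hte)
  · exact cusumWeight_le_cusumWeight hsl hlt hte

end segment

lemma Nat.exists_lt_le_succ_of_le {α : Type*} [LinearOrder α] (f : ℕ → α) {a b : ℕ} {x : α}
    (hab : a ≤ b) (ha : f a < x) (hb : x ≤ f b) :
    ∃ j, a ≤ j ∧ j < b ∧ f j < x ∧ x ≤ f (j + 1) := by
  induction b, hab using Nat.le_induction with
  | base => exact absurd (ha.trans_le hb) (lt_irrefl _)
  | succ n han ih =>
    by_cases hn : x ≤ f n
    · obtain ⟨j, haj, hjn, hj⟩ := ih hn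
      exact ⟨j, haj, hjn.trans n.lt_succ_self, hj⟩
    · exact ⟨n, han, n.lt_succ_self, not_le.1 hn, hb⟩

/-- **CUSUM maximum attained at a breakpoint.**  If `(σ_t)_{t=s}^{e}` is piecewise
constant with breakpoints `s ≤ η_1 < … < η_q < e` (`q ≥ 1`), i.e. constant on `[s, η_1]`,
on each `(η_j, η_{j+1}]` and on `(η_q, e]`, then the maximum of `|S^t_{s,e}|` over
`s < t < e` is attained at one of the breakpoints. -/
theorem cusum_max_at_breakpoint (s e q : ℕ) (η : ℕ → ℕ) (σ : ℕ → ℝ)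
    (hq : 1 ≤ q) (hs1 : s ≤ η 1) (hmono : ∀ j, 1 ≤ j → j < q → η j < η (j + 1))
    (hqe : η q < e)
    (hconst₀ : ∀ t, s ≤ t → t ≤ η 1 → σ t = σ s)
    (hconst : ∀ j, 1 ≤ j → j < q → ∀ t, η j < t → t ≤ η (j + 1) → σ t = σ (η j + 1))
    (hconstq : ∀ t, η q < t → t ≤ e → σ t = σ (η q + 1)) :
    ∃ r, 1 ≤ r ∧ r ≤ q ∧
      ∀ t, s < t → t < e → |cusum σ s t e| ≤ |cusum σ s (η r) e| := by
  have hη : MonotoneOn η (Set.Icc 1 q) := monotoneOn_of_le_add_one Set.ordConnected_Icc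
    fun j _ hj hj' ↦ (hmono j hj.1 (by simpa using hj'.2)).le
  have hsη : ∀ j, 1 ≤ j → j ≤ q → s ≤ η j := fun j h₁ h₂ ↦
    hs1.trans (hη ⟨le_rfl, hq⟩ ⟨h₁, h₂⟩ h₁)
  have hηe : ∀ j, 1 ≤ j → j ≤ q → η j < e := fun j h₁ h₂ ↦
    (hη ⟨h₁, h₂⟩ ⟨hq, le_rfl⟩ h₂).trans_lt hqe
  obtain ⟨r, hr, hmax⟩ := (Icc 1 q).exists_max_image (fun j ↦ |cusum σ s (η j) e|)
    ⟨1, mem_Icc.2 ⟨le_rfl, hq⟩⟩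
  have hle_max : ∀ j, 1 ≤ j → j ≤ q → |cusum σ s (η j) e| ≤ |cusum σ s (η r) e| :=
    fun j h₁ h₂ ↦ hmax j (mem_Icc.2 ⟨h₁, h₂⟩)
  refine ⟨r, (mem_Icc.1 hr).1, (mem_Icc.1 hr).2, fun t hst hte ↦ ?_⟩
  rcases le_or_gt t (η 1) with h₁ | h₁
  · exact (abs_cusum_le_of_eqOn_Icc_left σ hst.le h₁ (hηe 1 le_rfl hq) hconst₀).trans
      (hle_max 1 le_rfl hq)
  rcases lt_or_ge (η q) t with hq' | hq'
  · exact (abs_cusum_le_of_eqOn_Ioc_right σ (hsη q hq le_rfl) hq'.le hte hconstq).trans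
      (hle_max q hq le_rfl)
  obtain ⟨j, hj₁, hjq, hjt, htj⟩ := Nat.exists_lt_le_succ_of_le η hq h₁ hq'
  exact (abs_cusum_le_max_of_eqOn_Ioc σ (hsη j hj₁ hjq.le) hjt.le htj (hηe (j + 1) (by omega) hjq)
    (hconst j hj₁ hjq)).trans (max_le (hle_max j hj₁ hjq.le) (hle_max (j + 1) (by omega) hjq))
end

section
/- Bernstein-type concentration for weighted centered chi-squares: There exists an absolute constant C₀ > 0 such that for every n ≥ 1, every λ = (λ_1,…,λ_n) ∈ ℝⁿ, every x ≥ 0, and independent standard normal random variables U_1,…,U_n: P( |Σ_{i=1}^{n} λ_i (U_i² − 1)| ≥ x ) ≤ 2 exp( − x² / ( C₀ ( Σ_{i=1}^{n} λ_i² + max_i |λ_i| · x ) ) ). -/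
/-!
For a standard normal `U` and `c < 1/2`, `E exp (c (U² - 1)) = e^{-c} / √(1 - 2c)`, which is at
most `exp (2c²)` once `c ≤ 1/4` (this is `exp (-s - s²) ≤ 1 - s` at `s = 2c`). By independence and
Chernoff's bound, `P(∑ λᵢ (Uᵢ² - 1) ≥ x) ≤ exp (-t x + 2 t² ∑ λᵢ²)` whenever `t λᵢ ≤ 1/4` for all
`i`; the choice `t = x / (4 D)` with `D = ∑ λᵢ² + maxᵢ |λᵢ| x` makes the exponent at most
`-x² / (8 D)`. A union bound over the two tails gives the factor `2`, with `C₀ = 8`.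
-/

open MeasureTheory ProbabilityTheory Real

lemma exp_neg_sub_sq_le_one_sub {s : ℝ} (hs : s ≤ 1 / 2) : exp (-s - s ^ 2) ≤ 1 - s := by
  suffices h : 1 ≤ (1 - s) * exp (s + s ^ 2) by
    calc exp (-s - s ^ 2) ≤ exp (-s - s ^ 2) * ((1 - s) * exp (s + s ^ 2)) :=
          le_mul_of_one_le_right (exp_nonneg _) h
      _ = 1 - s := by
        rw [mul_left_comm, ← exp_add, show -s - s ^ 2 + (s + s ^ 2) = 0 by ring, exp_zero,
          mul_one]
  rcases le_total s 0 with hs0 | hs0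
  · -- `(1 - s)(1 + s + s²) = 1 - s³`
    nlinarith [add_one_le_exp (s + s ^ 2), pow_two_nonneg s]
  · -- `(1 - s)(1 + a + a²/2) = 1 + s²(1 - s - s² - s³)/2` for `a = s + s²`
    nlinarith [quadratic_le_exp_of_nonneg (by positivity : 0 ≤ s + s ^ 2),
      mul_nonneg (pow_two_nonneg s) (show 0 ≤ 1 - s - s ^ 2 - s ^ 3 by nlinarith)]

lemma mgf_sq_sub_one_gaussianReal {c : ℝ} (hc : c < 1 / 2) :
    mgf (fun u ↦ u ^ 2 - 1) (gaussianReal 0 1) c = exp (-c) / √(1 - 2 * c) := by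
  have hdens : ∀ u : ℝ, gaussianPDFReal 0 1 u • exp (c * (u ^ 2 - 1))
      = ((√(2 * π))⁻¹ * exp (-c)) * exp (-(1 / 2 - c) * u ^ 2) := by
    intro u
    simp only [gaussianPDFReal, NNReal.coe_one, mul_one, sub_zero, smul_eq_mul]
    rw [mul_assoc, mul_assoc, ← exp_add, ← exp_add]
    ring_nf
  have hπ : π / (1 / 2 - c) = 2 * π / (1 - 2 * c) := by field_simp
  rw [mgf, integral_gaussianReal_eq_integral_smul one_ne_zero]
  simp only [hdens, integral_const_mul, integral_gaussian, hπ]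
  rw [sqrt_div' _ (by linarith)]
  have : 0 < √(2 * π) := by positivity
  field_simp

lemma mgf_sq_sub_one_gaussianReal_le {c : ℝ} (hc : c ≤ 1 / 4) :
    mgf (fun u ↦ u ^ 2 - 1) (gaussianReal 0 1) c ≤ exp (2 * c ^ 2) := by
  have h2c : 0 < 1 - 2 * c := by linarith
  rw [mgf_sq_sub_one_gaussianReal (by linarith), div_le_iff₀ (sqrt_pos.2 h2c)]
  have key : exp (-c - 2 * c ^ 2) ≤ √(1 - 2 * c) := by
    rw [show -c - 2 * c ^ 2 = (-(2 * c) - (2 * c) ^ 2) / 2 by ring, exp_half]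
    exact sqrt_le_sqrt (exp_neg_sub_sq_le_one_sub (by linarith))
  calc exp (-c) = exp (2 * c ^ 2) * exp (-c - 2 * c ^ 2) := by rw [← exp_add]; ring_nf
    _ ≤ exp (2 * c ^ 2) * √(1 - 2 * c) := by gcongr

section

variable {Ω ι : Type*} {mΩ : MeasurableSpace Ω} {μ : Measure Ω} [Fintype ι]

lemma measureReal_sum_ge_le_of_iIndepFun {X : ι → Ω → ℝ} (hind : iIndepFun X μ)
    (hmeas : ∀ i, AEMeasurable (X i) μ) {t : ℝ} (ht : 0 ≤ t)
    (hint : ∀ i, Integrable (fun ω ↦ exp (t * X i ω)) μ) {v : ι → ℝ}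
    (hmgf : ∀ i, mgf (X i) μ t ≤ exp (v i)) (ε : ℝ) :
    μ.real {ω | ε ≤ ∑ i, X i ω} ≤ exp (-t * ε + ∑ i, v i) := by
  have := hind.isProbabilityMeasure
  have hmgf_sum : mgf (∑ i, X i) μ t = ∏ i, mgf (X i) μ t := hind.mgf_sum₀ hmeas _
  -- the integrability of `exp (t * ∑ X i)` is read off the positivity of its integral
  have hint_sum : Integrable (fun ω ↦ exp (t * (∑ i, X i) ω)) μ := by
    rw [← mgf_pos_iff, hmgf_sum]
    exact Finset.prod_pos fun i _ ↦ mgf_pos (hint i)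
  calc μ.real {ω | ε ≤ ∑ i, X i ω} = μ.real {ω | ε ≤ (∑ i, X i) ω} := by
        simp only [Finset.sum_apply]
    _ ≤ exp (-t * ε) * mgf (∑ i, X i) μ t := measure_ge_le_exp_mul_mgf ε ht hint_sum
    _ ≤ exp (-t * ε) * ∏ i, exp (v i) := by
        rw [hmgf_sum]
        gcongr with i
        · exact fun i _ ↦ mgf_nonneg
        · exact hmgf i
    _ = exp (-t * ε + ∑ i, v i) := by rw [exp_add, exp_sum]

lemma mgf_const_mul_sq_sub_one {U : Ω → ℝ} (hU : μ.map U = gaussianReal 0 1) (a t : ℝ) :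
    mgf (fun ω ↦ a * (U ω ^ 2 - 1)) μ t = mgf (fun u ↦ u ^ 2 - 1) (gaussianReal 0 1) (a * t) := by
  have hUm : AEMeasurable U μ := aemeasurable_of_map_neZero (by rw [hU]; infer_instance)
  rw [mgf_const_mul, ← Function.comp_def (fun u ↦ u ^ 2 - 1) U, ← mgf_map hUm (by fun_prop), hU]

lemma integrable_exp_mul_const_mul_sq_sub_one {U : Ω → ℝ} (hU : μ.map U = gaussianReal 0 1)
    {a t : ℝ} (hat : a * t < 1 / 2) :
    Integrable (fun ω ↦ exp (t * (a * (U ω ^ 2 - 1)))) μ := by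
  have : NeZero μ := ⟨fun h ↦ by
    rw [h, Measure.map_zero] at hU; exact IsProbabilityMeasure.ne_zero _ hU.symm⟩
  rw [← mgf_pos_iff, mgf_const_mul_sq_sub_one hU, mgf_sq_sub_one_gaussianReal hat]
  have : 0 < 1 - 2 * (a * t) := by linarith
  positivity

lemma measureReal_weighted_sq_sub_one_ge_le {U : ι → Ω → ℝ} (hind : iIndepFun U μ)
    (hU : ∀ i, μ.map (U i) = gaussianReal 0 1) {l : ι → ℝ} {B x : ℝ} (hB : 0 ≤ B) (hx : 0 ≤ x)
    (hlB : ∀ i, l i ≤ B) :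
    μ.real {ω | x ≤ ∑ i, l i * (U i ω ^ 2 - 1)} ≤
      exp (-x ^ 2 / (8 * (∑ i, l i ^ 2 + B * x))) := by
  have := hind.isProbabilityMeasure
  set σ := ∑ i, l i ^ 2
  have hσ : 0 ≤ σ := Finset.sum_nonneg fun i _ ↦ sq_nonneg _
  set D := σ + B * x
  rcases (show 0 ≤ D by positivity).eq_or_lt with hD | hD
  · -- the bound is `exp (-x² / 0) = 1`
    simp [← hD]
  have hUm : ∀ i, AEMeasurable (U i) μ :=
    fun i ↦ aemeasurable_of_map_neZero (by rw [hU i]; infer_instance)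
  set t := x / (4 * D)
  have ht : 0 ≤ t := by positivity
  have hlt : ∀ i, l i * t ≤ 1 / 4 := fun i ↦ by
    calc l i * t ≤ B * t := mul_le_mul_of_nonneg_right (hlB i) ht
      _ ≤ 1 / 4 := by rw [mul_div_assoc', div_le_iff₀ (by positivity)]; nlinarith
  have hchernoff := measureReal_sum_ge_le_of_iIndepFun (X := fun i ω ↦ l i * (U i ω ^ 2 - 1))
    (hind.comp (fun i u ↦ l i * (u ^ 2 - 1)) fun i ↦ by fun_prop)
    (fun i ↦ by have := hUm i; fun_prop)
    ht (fun i ↦ integrable_exp_mul_const_mul_sq_sub_one (hU i) (by linarith [hlt i]))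
    (fun i ↦ (mgf_const_mul_sq_sub_one (hU i) _ _).trans_le
      (mgf_sq_sub_one_gaussianReal_le (hlt i))) x
  refine hchernoff.trans (exp_le_exp.2 ?_)
  have hsum : ∑ i, 2 * (l i * t) ^ 2 = 2 * t ^ 2 * σ := by
    simp only [σ, Finset.mul_sum]; exact Finset.sum_congr rfl fun i _ ↦ by ring
  have hσD : σ ≤ D := le_add_of_nonneg_right (by positivity)
  rw [hsum, le_div_iff₀ (by positivity)]
  simp only [t]
  field_simp
  nlinarith [mul_le_mul_of_nonneg_left hσD (sq_nonneg x)]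

lemma measure_abs_weighted_sq_sub_one_ge_le {U : ι → Ω → ℝ} (hind : iIndepFun U μ)
    (hU : ∀ i, μ.map (U i) = gaussianReal 0 1) {l : ι → ℝ} {B x : ℝ} (hB : 0 ≤ B) (hx : 0 ≤ x)
    (hlB : ∀ i, |l i| ≤ B) :
    μ {ω | x ≤ |∑ i, l i * (U i ω ^ 2 - 1)|} ≤
      ENNReal.ofReal (2 * exp (-x ^ 2 / (8 * (∑ i, l i ^ 2 + B * x)))) := by
  have := hind.isProbabilityMeasure
  have hsub : {ω | x ≤ |∑ i, l i * (U i ω ^ 2 - 1)|} ⊆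
      {ω | x ≤ ∑ i, l i * (U i ω ^ 2 - 1)} ∪ {ω | x ≤ ∑ i, -l i * (U i ω ^ 2 - 1)} := by
    intro ω (hω : x ≤ |_|)
    rcases le_abs'.1 hω with h | h
    · right
      show x ≤ ∑ i, -l i * (U i ω ^ 2 - 1)
      simp only [neg_mul, Finset.sum_neg_distrib]
      linarith
    · exact Or.inl h
  rw [← ofReal_measureReal]
  gcongr
  calc μ.real {ω | x ≤ |∑ i, l i * (U i ω ^ 2 - 1)|}
      ≤ μ.real {ω | x ≤ ∑ i, l i * (U i ω ^ 2 - 1)} +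
          μ.real {ω | x ≤ ∑ i, -l i * (U i ω ^ 2 - 1)} :=
        (measureReal_mono hsub).trans (measureReal_union_le _ _)
    _ ≤ _ := by
      rw [two_mul]
      gcongr
      · exact measureReal_weighted_sq_sub_one_ge_le hind hU hB hx
          fun i ↦ (le_abs_self _).trans (hlB i)
      · simpa using measureReal_weighted_sq_sub_one_ge_le hind hU hB hx (l := fun i ↦ -l i)
          fun i ↦ (neg_le_abs _).trans (hlB i)

end

/-- **Bernstein-type concentration for weighted centered chi-squares.**  There is an
absolute constant `C₀ > 0` such that for every `n ≥ 1` (written `n + 1` below), every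
vector of weights `λ`, every `x ≥ 0` and independent standard normal variables
`U_1, …, U_n`,
`P(|Σ_i λ_i (U_i² − 1)| ≥ x) ≤ 2·exp(−x² / (C₀(Σ_i λ_i² + max_i |λ_i| · x)))`. -/
theorem bernstein_weighted_chisq :
    ∃ C₀ : ℝ, 0 < C₀ ∧
      ∀ (Ω : Type) (mΩ : MeasurableSpace Ω) (μ : Measure Ω), IsProbabilityMeasure μ →
        ∀ (n : ℕ) (U : Fin (n + 1) → Ω → ℝ),
          iIndepFun U μ →
          (∀ i, Measure.map (U i) μ = gaussianReal 0 1) →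
          ∀ (l : Fin (n + 1) → ℝ) (x : ℝ), 0 ≤ x →
            μ {ω | x ≤ |∑ i, l i * ((U i ω) ^ 2 - 1)|} ≤
              ENNReal.ofReal (2 * Real.exp (-(x ^ 2) /
                (C₀ * (∑ i, (l i) ^ 2 + (⨆ i, |l i|) * x)))) := by
  refine ⟨8, by norm_num, fun Ω _ μ _ n U hind hU l x hx ↦ ?_⟩
  have hlB : ∀ i, |l i| ≤ ⨆ j, |l j| := le_ciSup (Set.finite_range _).bddAbove
  exact measure_abs_weighted_sq_sub_one_ge_le hind hU ((abs_nonneg _).trans (hlB 0)) hx hlB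
end

section
/- Trace bound for products with a banded-dominated matrix: Let n ≥ 1, let ρ : ℕ → [0, ∞), and let V, W be n×n real matrices such that |V_{ij}| ≤ ρ(|i − j|) for all i, j, and W is diagonal with |W_{ii}| ≤ K for all i. Then trace((VW)²) ≤ n K² ρ²_∞, where ρ²_∞ = ρ(0)² + 2 Σ_{τ=1}^{∞} ρ(τ)² (assumed finite). -/
/-!
Since `W` is diagonal, `((VW)²)ᵢᵢ = Σⱼ Vᵢⱼ Wⱼⱼ Vⱼᵢ Wᵢᵢ`, and each summand is at most
`ρ(|i - j|)² K²`. For fixed `i`, the map `j ↦ i - j` is injective into `ℤ`, so the row sum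
`Σⱼ ρ(|i - j|)²` is a partial sum of the nonnegative series `Σ_{k ∈ ℤ} ρ(|k|)² = ρ²_∞`.
-/

open Matrix Finset

theorem hasSum_int_natAbs {f : ℕ → ℝ} (hf : Summable f) :
    HasSum (fun k : ℤ => f k.natAbs) (f 0 + 2 * ∑' τ, f (τ + 1)) := by
  have hnonneg : HasSum (fun n : ℕ => f (n : ℤ).natAbs) (f 0 + ∑' τ, f (τ + 1)) := by
    simpa only [Int.natAbs_natCast, hf.tsum_eq_zero_add] using hf.hasSum
  have hneg : HasSum (fun n : ℕ => f (-((n : ℤ) + 1)).natAbs) (∑' τ, f (τ + 1)) := by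
    simpa only [show ∀ n : ℕ, (-((n : ℤ) + 1)).natAbs = n + 1 by omega]
      using ((summable_nat_add_iff 1).2 hf).hasSum
  rw [two_mul, ← add_assoc]
  exact hnonneg.of_nat_of_neg_add_one hneg

theorem Nat.dist_eq_natAbs_sub (i j : ℕ) : Nat.dist i j = ((i : ℤ) - j).natAbs := by
  unfold Nat.dist
  omega

theorem sum_comp_dist_le {f : ℕ → ℝ} (hf : Summable f) (hf₀ : 0 ≤ f) (i : ℕ) (s : Finset ℕ) :
    ∑ j ∈ s, f (Nat.dist i j) ≤ f 0 + 2 * ∑' τ, f (τ + 1) := by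
  have hinj : Set.InjOn (fun j : ℕ => (i : ℤ) - j) s := fun a _ b _ h => by simpa using h
  calc ∑ j ∈ s, f (Nat.dist i j)
      = ∑ k ∈ s.image (fun j : ℕ => (i : ℤ) - j), f k.natAbs := by
        rw [sum_image hinj]
        simp only [Nat.dist_eq_natAbs_sub]
    _ ≤ f 0 + 2 * ∑' τ, f (τ + 1) := sum_le_hasSum _ (fun k _ => hf₀ _) (hasSum_int_natAbs hf)

theorem Matrix.trace_sq_eq_sum {ι α : Type*} [Fintype ι] [DecidableEq ι] [Semiring α]
    (A : Matrix ι ι α) : trace (A ^ 2) = ∑ i, ∑ j, A i j * A j i := by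
  simp only [sq, trace, diag_apply, mul_apply]

theorem mul_le_sq_of_abs_le {α : Type*} [Field α] [LinearOrder α] [IsStrictOrderedRing α]
    {a b c : α} (ha : |a| ≤ c) (hb : |b| ≤ c) : a * b ≤ c ^ 2 :=
  calc a * b ≤ |a| * |b| := (le_abs_self _).trans (abs_mul a b).le
    _ ≤ c ^ 2 := by rw [sq]; exact mul_le_mul ha hb (abs_nonneg b) ((abs_nonneg a).trans ha)

theorem abs_mul_diagonal_apply_le {ι α : Type*} [Fintype ι] [DecidableEq ι] [Field α]
    [LinearOrder α] [IsStrictOrderedRing α] {V : Matrix ι ι α} {d : ι → α} {r : ι → ι → α}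
    {K : α} (hV : ∀ i j, |V i j| ≤ r i j) (hd : ∀ i, |d i| ≤ K) (i j : ι) :
    |(V * diagonal d) i j| ≤ r i j * K := by
  rw [mul_diagonal, abs_mul]
  exact mul_le_mul (hV i j) (hd j) (abs_nonneg _) ((abs_nonneg _).trans (hV i j))

theorem trace_bound_banded_general (n : ℕ) (ρ : ℕ → ℝ)
    (hsum : Summable fun τ => (ρ τ) ^ 2)
    (V W : Matrix (Fin n) (Fin n) ℝ) (K : ℝ)
    (hV : ∀ i j, |V i j| ≤ ρ (Nat.dist (i : ℕ) (j : ℕ)))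
    (hWdiag : ∀ i j, i ≠ j → W i j = 0)
    (hWK : ∀ i, |W i i| ≤ K) :
    Matrix.trace ((V * W) ^ 2) ≤
      (n : ℝ) * K ^ 2 * ((ρ 0) ^ 2 + 2 * ∑' τ : ℕ, (ρ (τ + 1)) ^ 2) := by
  have hW : W = diagonal W.diag := (IsDiag.diagonal_diag fun i j => hWdiag i j).symm
  have hentry (i j : Fin n) : |(V * W) i j| ≤ ρ (Nat.dist i j) * K := by
    rw [hW]
    exact abs_mul_diagonal_apply_le hV hWK i j
  have hrow (i : Fin n) : ∑ j : Fin n, ρ (Nat.dist i j) ^ 2 ≤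
      ρ 0 ^ 2 + 2 * ∑' τ : ℕ, ρ (τ + 1) ^ 2 :=
    (Fin.sum_univ_eq_sum_range (fun j => ρ (Nat.dist i j) ^ 2) n).trans_le
      (sum_comp_dist_le hsum (fun τ => sq_nonneg _) i (range n))
  calc trace ((V * W) ^ 2) = ∑ i, ∑ j, (V * W) i j * (V * W) j i := trace_sq_eq_sum _
    _ ≤ ∑ i : Fin n, ∑ j : Fin n, (ρ (Nat.dist i j) * K) ^ 2 := by
      gcongr with i _ j _
      exact mul_le_sq_of_abs_le (hentry i j) (Nat.dist_comm (j : ℕ) i ▸ hentry j i)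
    _ = K ^ 2 * ∑ i : Fin n, ∑ j : Fin n, ρ (Nat.dist i j) ^ 2 := by
      simp only [mul_pow, mul_sum, mul_comm]
    _ ≤ K ^ 2 * ∑ _i : Fin n, (ρ 0 ^ 2 + 2 * ∑' τ : ℕ, ρ (τ + 1) ^ 2) := by
      gcongr with i _
      exact hrow i
    _ = (n : ℝ) * K ^ 2 * (ρ 0 ^ 2 + 2 * ∑' τ : ℕ, ρ (τ + 1) ^ 2) := by
      rw [sum_const, card_univ, Fintype.card_fin, nsmul_eq_mul]
      ring

/-- **Trace bound for products with a banded-dominated matrix.**  If `|V_{ij}| ≤ ρ(|i−j|)`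
and `W` is diagonal with `|W_{ii}| ≤ K`, then
`trace((VW)²) ≤ n·K²·ρ²_∞`, where `ρ²_∞ = ρ(0)² + 2·Σ_{τ≥1} ρ(τ)²` (assumed finite). -/
theorem trace_bound_banded (n : ℕ) (hn : 1 ≤ n) (ρ : ℕ → ℝ) (hρ : ∀ τ, 0 ≤ ρ τ)
    (hsum : Summable fun τ => (ρ τ) ^ 2)
    (V W : Matrix (Fin n) (Fin n) ℝ) (K : ℝ)
    (hV : ∀ i j, |V i j| ≤ ρ (Nat.dist (i : ℕ) (j : ℕ)))
    (hWdiag : ∀ i j, i ≠ j → W i j = 0)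
    (hWK : ∀ i, |W i i| ≤ K) :
    Matrix.trace ((V * W) ^ 2) ≤
      (n : ℝ) * K ^ 2 * ((ρ 0) ^ 2 + 2 * ∑' τ : ℕ, (ρ (τ + 1)) ^ 2) :=
  trace_bound_banded_general n ρ hsum V W K hV hWdiag hWK
end
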